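/- With m, A in a field k of characteristic ≠ 2, s² = m² - 4, w² = (m+2+A)² - 4(m-2), u = (m+s)/2, q₁(x) = x² + ((-A+s-w)/2)x + (m+s)/2, q₂(x) = x² + ((-A+s+w)/2)x + (m+s)/2: the product of discriminants disc(q₁)·disc(q₂) = (A² - 4(m-2))·(u-1)², and the resultant Res(q₁, q₂) = w²·u. -/

import Mathlib

/-- Discriminant of a monic quadratic `x² + bx + c`. -/
def disc2 {K : Type*} [Field K] (b c : K) : K := b ^ 2 - 4 * c

/-- Resultant of two monic quadratics `x² + b₁x + c₁` and `x² + b₂x + c₂`. -/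
def res2 {K : Type*} [Field K] (b₁ c₁ b₂ c₂ : K) : K :=
  (b₂ - b₁) ^ 2 * c₁ - (b₂ - b₁) * (c₂ - c₁) * b₁ + (c₂ - c₁) ^ 2

/-!
Both quadratics have constant term `u = (m + s)/2`, so the resultant is `(b₂ - b₁)² u = w² u`.
For the discriminants, write `m = u + v` and `s = u - v` with `u v = 1` (the roots of
`x² - m x + 1`). Then `w² - (s - A)² = 4 (A (u + 1) + 4)` because `(u + v + A + 2)² - (u - v - A)²`
factors as `4 (u + 1)(v + A + 1)`, and the product `disc(p - d) · disc(p + d)` depends only on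
`d² - p²` and `p² + d²`, which reduces everything to an identity modulo `u v = 1`.
-/

section

variable {K : Type*} [Field K]

theorem disc2_sub_mul_disc2_add (p d c : K) :
    disc2 (p - d) c * disc2 (p + d) c = (d ^ 2 - p ^ 2) ^ 2 - 8 * c * (p ^ 2 + d ^ 2) + 16 * c ^ 2 := by
  unfold disc2; ring

theorem res2_of_const_eq (b₁ b₂ c : K) : res2 b₁ c b₂ c = (b₂ - b₁) ^ 2 * c := by
  simp [res2]

theorem disc2_mul_disc2_of_mul_eq_one (h2 : (2 : K) ≠ 0) {u v A w : K} (huv : u * v = 1)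
    (hw : w ^ 2 = (u + v + 2 + A) ^ 2 - 4 * (u + v - 2)) :
    disc2 ((-A + (u - v) - w) / 2) u * disc2 ((-A + (u - v) + w) / 2) u
      = (A ^ 2 - 4 * (u + v - 2)) * (u - 1) ^ 2 := by
  have key : w ^ 2 - (u - v - A) ^ 2 = 4 * (A * (u + 1) + 4) := by
    linear_combination hw + 4 * huv
  set p := (u - v - A) / 2 with hp
  have hX : (w / 2) ^ 2 - p ^ 2 = A * (u + 1) + 4 := by
    rw [hp]; field_simp; linear_combination key
  calc disc2 ((-A + (u - v) - w) / 2) u * disc2 ((-A + (u - v) + w) / 2) u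
      = disc2 (p - w / 2) u * disc2 (p + w / 2) u := by rw [hp]; ring_nf
    _ = ((w / 2) ^ 2 - p ^ 2) ^ 2 - 8 * u * (2 * p ^ 2 + ((w / 2) ^ 2 - p ^ 2)) + 16 * u ^ 2 := by
      rw [disc2_sub_mul_disc2_add]; ring
    _ = (A * (u + 1) + 4) ^ 2 - 4 * u * (u - v - A) ^ 2 - 8 * u * (A * (u + 1) + 4) + 16 * u ^ 2 := by
      rw [hX, hp]; field_simp; ring
    _ = (A ^ 2 - 4 * (u + v - 2)) * (u - 1) ^ 2 := by
      linear_combination (12 * u - 4 * v - 8 - 8 * A) * huv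

theorem disc2_mul_disc2_of_sq_eq (h2 : (2 : K) ≠ 0) {M A s w : K} (hs : s ^ 2 = M ^ 2 - 4)
    (hw : w ^ 2 = (M + 2 + A) ^ 2 - 4 * (M - 2)) :
    disc2 ((-A + s - w) / 2) ((M + s) / 2) * disc2 ((-A + s + w) / 2) ((M + s) / 2)
      = (A ^ 2 - 4 * (M - 2)) * ((M + s) / 2 - 1) ^ 2 := by
  obtain ⟨u, v, rfl, rfl, huv⟩ : ∃ u v : K, M = u + v ∧ s = u - v ∧ u * v = 1 :=
    ⟨(M + s) / 2, (M - s) / 2, by field_simp; ring, by field_simp; ring,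
      by field_simp; linear_combination -hs⟩
  rw [show (u + v + (u - v)) / 2 = u by field_simp; ring]
  exact disc2_mul_disc2_of_mul_eq_one h2 huv hw

end

/-- with `s² = m² - 4`, `w² = (m+2+A)² - 4(m-2)`, `u = (m+s)/2`,
`q₁(x) = x² + ((-A+s-w)/2)x + (m+s)/2` and `q₂(x) = x² + ((-A+s+w)/2)x + (m+s)/2`:
`disc(q₁)·disc(q₂) = (A² - 4(m-2))·(u-1)²` and `Res(q₁, q₂) = w²·u`. -/
theorem disc_res_q1_q2 {k K : Type*} [Field k] [Field K] [Algebra k K]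
    (h2 : (2 : k) ≠ 0) (m A : k)
    (s w : K) (hs : s ^ 2 = algebraMap k K (m ^ 2 - 4))
    (hw : w ^ 2 = algebraMap k K ((m + 2 + A) ^ 2 - 4 * (m - 2))) :
    let M := algebraMap k K m
    let A' := algebraMap k K A
    let u := (M + s) / 2
    disc2 ((-A' + s - w) / 2) ((M + s) / 2) * disc2 ((-A' + s + w) / 2) ((M + s) / 2)
        = algebraMap k K (A ^ 2 - 4 * (m - 2)) * (u - 1) ^ 2 ∧
    res2 ((-A' + s - w) / 2) ((M + s) / 2) ((-A' + s + w) / 2) ((M + s) / 2)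
        = w ^ 2 * u := by
  intro M A' u
  have h2K : (2 : K) ≠ 0 := by
    rw [← map_ofNat (algebraMap k K) 2]; exact (map_ne_zero _).mpr h2
  simp only [map_sub, map_pow, map_mul, map_add, map_ofNat] at hs hw ⊢
  refine ⟨disc2_mul_disc2_of_sq_eq h2K hs hw, ?_⟩
  rw [res2_of_const_eq, show (-A' + s + w) / 2 - (-A' + s - w) / 2 = w by field_simp; ring]
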